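/- Let $H, h$ be nonnegative continuous functions on $[0,1]$ and $0 < \delta < 1/4$. Suppose there is a constant $C_0$ such that for all $r\in[\delta,1/2]$: (a) $\max_{r\le t\le 2r} H(t) \le C_0 H(2r)$, (b) $\max_{r\le t,s\le 2r}|h(t)-h(s)| \le C_0 H(2r)$, and (c) $H(\theta r) \le \frac12 H(r) + C_0\,\eta(\delta/r)\{H(2r) + h(2r)\}$, where $\theta\in(0,1/4)$ and $\eta:[0,1]\to[0,\infty)$ is nondecreasing with $\eta(0)=0$ and $\int_0^1 \eta(t)/t\,dt < \infty$. Then $\max_{\delta\le r\le 1}\{H(r) + h(r)\} \le C\{H(1)+h(1)\}$, where $C$ depends only on $C_0$, $\theta$, and $\eta$. -/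
import Mathlib
open MeasureTheory


lemma dini_summable {θ : ℝ} (hθ0 : 0 < θ) (hθ1 : θ < 1) {η : ℝ → ℝ}
    (hη_nonneg : ∀ t ∈ Set.Icc (0:ℝ) 1, 0 ≤ η t)
    (hη_mono : MonotoneOn η (Set.Icc (0:ℝ) 1))
    (hDini : IntegrableOn (fun t => η t / t) (Set.Ioc (0:ℝ) 1)) :
    Summable (fun k : ℕ => η (θ ^ k)) := by
  have hmem : ∀ k : ℕ, θ ^ k ∈ Set.Icc (0:ℝ) 1 :=
    fun k => ⟨(pow_pos hθ0 k).le, pow_le_one₀ hθ0.le hθ1.le⟩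
  have h1θ : 1 < θ⁻¹ := by
    rw [← one_div, lt_div_iff₀ hθ0]; linarith
  have hL : 0 < Real.log θ⁻¹ := Real.log_pos h1θ
  have hg0 : ∀ x ∈ Set.Ioc (0:ℝ) 1, 0 ≤ η x / x := fun x hx =>
    div_nonneg (hη_nonneg x ⟨hx.1.le, hx.2⟩) hx.1.le
  -- per-piece lower bound
  have piece : ∀ k : ℕ, η (θ ^ (k+1)) * Real.log θ⁻¹ ≤ ∫ x in (θ^(k+1))..(θ^k), η x / x := by
    intro k
    have ha0 : 0 < θ^(k+1) := pow_pos hθ0 _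
    have hb0 : 0 < θ^k := pow_pos hθ0 _
    have hab : θ^(k+1) ≤ θ^k := pow_le_pow_of_le_one hθ0.le hθ1.le (Nat.le_succ k)
    have hb1 : θ^k ≤ 1 := (hmem k).2
    have hsub : Set.Ioc (θ^(k+1)) (θ^k) ⊆ Set.Ioc (0:ℝ) 1 := fun x hx =>
      ⟨ha0.trans hx.1, hx.2.trans hb1⟩
    have hint2 : IntegrableOn (fun x => η x / x) (Set.Ioc (θ^(k+1)) (θ^k)) volume :=
      hDini.mono_set hsub
    have hint1 : IntegrableOn (fun x => η (θ^(k+1)) / x) (Set.Ioc (θ^(k+1)) (θ^k)) volume := by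
      have : IntervalIntegrable (fun x : ℝ => η (θ^(k+1)) * x⁻¹) volume (θ^(k+1)) (θ^k) := by
        apply IntervalIntegrable.const_mul
        apply intervalIntegral.intervalIntegrable_inv (f := fun x : ℝ => x) ?_ continuousOn_id
        intro x hx
        rw [Set.uIcc_of_le hab] at hx
        exact (lt_of_lt_of_le ha0 hx.1).ne'
      simpa [div_eq_mul_inv] using (intervalIntegrable_iff_integrableOn_Ioc_of_le hab).1 this
    have hmono : ∀ x ∈ Set.Ioc (θ^(k+1)) (θ^k), η (θ^(k+1)) / x ≤ η x / x := by
      intro x hx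
      have hx0 : 0 < x := ha0.trans hx.1
      have hηle : η (θ^(k+1)) ≤ η x :=
        hη_mono (hmem (k+1)) ⟨hx0.le, hx.2.trans hb1⟩ hx.1.le
      gcongr
    have hba : θ^k / θ^(k+1) = θ⁻¹ := by
      rw [pow_succ]
      field_simp
    have h1 : ∫ x in (θ^(k+1))..(θ^k), η (θ^(k+1)) / x = η (θ^(k+1)) * Real.log θ⁻¹ := by
      simp only [div_eq_mul_inv]
      rw [intervalIntegral.integral_const_mul, integral_inv_of_pos ha0 hb0, hba]
    calc η (θ^(k+1)) * Real.log θ⁻¹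
        = ∫ x in (θ^(k+1))..(θ^k), η (θ^(k+1)) / x := h1.symm
      _ = ∫ x in Set.Ioc (θ^(k+1)) (θ^k), η (θ^(k+1)) / x :=
          intervalIntegral.integral_of_le hab
      _ ≤ ∫ x in Set.Ioc (θ^(k+1)) (θ^k), η x / x :=
          setIntegral_mono_on hint1 hint2 measurableSet_Ioc hmono
      _ = ∫ x in (θ^(k+1))..(θ^k), η x / x :=
          (intervalIntegral.integral_of_le hab).symm
  -- partial sums bounded
  have partial_bd : ∀ n : ℕ, ∑ k ∈ Finset.range n, η (θ^(k+1)) * Real.log θ⁻¹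
      ≤ ∫ x in Set.Ioc (0:ℝ) 1, η x / x := by
    intro n
    have step1 : ∑ k ∈ Finset.range n, η (θ^(k+1)) * Real.log θ⁻¹
        ≤ ∑ k ∈ Finset.range n, ∫ x in (θ^(k+1))..(θ^k), η x / x :=
      Finset.sum_le_sum fun k _ => piece k
    have tele : ∑ k ∈ Finset.range n, ∫ x in (θ^(k+1))..(θ^k), η x / x
        = ∫ x in (θ^n)..1, η x / x := by
      have key := intervalIntegral.sum_integral_adjacent_intervals (μ := volume)
          (a := fun i => θ ^ (n - i)) (n := n) (f := fun x => η x / x) ?_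
      · rw [← Finset.sum_range_reflect (fun k => ∫ x in (θ^(k+1))..(θ^k), η x / x) n]
        have e : ∀ j ∈ Finset.range n,
            (∫ x in (θ^((n-1-j)+1))..(θ^(n-1-j)), η x / x)
            = ∫ x in (θ^(n-j))..(θ^(n-(j+1))), η x / x := by
          intro j hj
          have hj' : j < n := Finset.mem_range.1 hj
          have e1 : (n-1-j)+1 = n-j := by omega
          have e2 : n-1-j = n-(j+1) := by omega
          rw [e1, e2]
        rw [Finset.sum_congr rfl e, key]
        simp
      · intro k hk
        have hab : θ^(n-k) ≤ θ^(n-(k+1)) :=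
          pow_le_pow_of_le_one hθ0.le hθ1.le (by omega)
        refine (intervalIntegrable_iff_integrableOn_Ioc_of_le hab).2 (hDini.mono_set ?_)
        intro x hx
        exact ⟨(pow_pos hθ0 _).trans hx.1, hx.2.trans (hmem _).2⟩
    have last : ∫ x in (θ^n)..1, η x / x ≤ ∫ x in Set.Ioc (0:ℝ) 1, η x / x := by
      rw [intervalIntegral.integral_of_le (hmem n).2]
      refine setIntegral_mono_set hDini ?_ ?_
      · exact (ae_restrict_iff' measurableSet_Ioc).2 (Filter.Eventually.of_forall hg0)
      · exact Filter.Eventually.of_forall (Set.Ioc_subset_Ioc_left (pow_pos hθ0 n).le)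
    calc ∑ k ∈ Finset.range n, η (θ^(k+1)) * Real.log θ⁻¹
        ≤ ∑ k ∈ Finset.range n, ∫ x in (θ^(k+1))..(θ^k), η x / x := step1
      _ = ∫ x in (θ^n)..1, η x / x := tele
      _ ≤ ∫ x in Set.Ioc (0:ℝ) 1, η x / x := last
  have hnn : ∀ k : ℕ, 0 ≤ η (θ^(k+1)) := fun k => hη_nonneg _ (hmem (k+1))
  have hsum1 : Summable (fun k : ℕ => η (θ^(k+1))) := by
    apply summable_of_sum_range_le (c := (∫ x in Set.Ioc (0:ℝ) 1, η x / x) / Real.log θ⁻¹) hnn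
    intro n
    rw [le_div_iff₀ hL, Finset.sum_mul]
    exact partial_bd n
  exact (summable_nat_add_iff 1).1 hsum1

set_option maxHeartbeats 3200000 in
/-- Lemma 7.5: the abstract real-variable iteration lemma. -/
theorem stmt_10 (C₀ θ : ℝ) (hC₀ : 0 < C₀) (hθ : θ ∈ Set.Ioo (0:ℝ) (1/4))
    (η : ℝ → ℝ) (hη_nonneg : ∀ t ∈ Set.Icc (0:ℝ) 1, 0 ≤ η t)
    (hη_mono : MonotoneOn η (Set.Icc (0:ℝ) 1)) (hη0 : η 0 = 0)
    (hDini : IntegrableOn (fun t => η t / t) (Set.Ioc (0:ℝ) 1)) :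
    ∃ C > 0, ∀ (H h : ℝ → ℝ) (δ : ℝ), 0 < δ → δ < 1/4 →
      ContinuousOn H (Set.Icc 0 1) → ContinuousOn h (Set.Icc 0 1) →
      (∀ r ∈ Set.Icc (0:ℝ) 1, 0 ≤ H r) → (∀ r ∈ Set.Icc (0:ℝ) 1, 0 ≤ h r) →
      (∀ r ∈ Set.Icc δ (1/2:ℝ), ∀ t ∈ Set.Icc r (2*r), H t ≤ C₀ * H (2*r)) →
      (∀ r ∈ Set.Icc δ (1/2:ℝ), ∀ t ∈ Set.Icc r (2*r), ∀ s ∈ Set.Icc r (2*r),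
        |h t - h s| ≤ C₀ * H (2*r)) →
      (∀ r ∈ Set.Icc δ (1/2:ℝ),
        H (θ * r) ≤ (1/2) * H r + C₀ * η (δ / r) * (H (2*r) + h (2*r))) →
      ∀ r ∈ Set.Icc δ (1:ℝ), H r + h r ≤ C * (H 1 + h 1) := by
  classical
  obtain ⟨hθ0, hθ4⟩ := hθ
  have hθ1 : θ < 1 := by linarith
  have hθle1 : ∀ j : ℕ, θ ^ j ≤ 1 := fun j => pow_le_one₀ hθ0.le hθ1.le
  have hpowθ : ∀ j : ℕ, 0 < θ ^ j := fun j => pow_pos hθ0 j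
  -- choose k₀ with θ⁻¹ ≤ 2^k₀ and 1 ≤ k₀
  obtain ⟨k₁, hk₁⟩ := pow_unbounded_of_one_lt (θ⁻¹) (one_lt_two (α := ℝ))
  set k₀ := k₁ + 1 with hk₀def
  have hk₀ : θ⁻¹ ≤ 2 ^ k₀ := by
    refine hk₁.le.trans ?_
    have : (2:ℝ)^k₁ * 1 ≤ 2^k₁ * 2 := by
      have : (0:ℝ) < 2^k₁ := pow_pos two_pos _
      nlinarith
    calc (2:ℝ)^k₁ = 2^k₁ * 1 := by ring
      _ ≤ 2^k₁ * 2 := this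
      _ = 2^k₀ := by rw [hk₀def, pow_succ]
  have hθ2 : (1:ℝ) ≤ 2^k₀ * θ := by
    have := mul_le_mul_of_nonneg_right hk₀ hθ0.le
    rwa [inv_mul_cancel₀ hθ0.ne'] at this
  -- constant K
  set K : ℝ := 3 * max C₀ 1 with hKdef
  have hmax1 : (1:ℝ) ≤ max C₀ 1 := le_max_right _ _
  have hK3 : (3:ℝ) ≤ K := by rw [hKdef]; nlinarith
  have hK1 : (1:ℝ) ≤ K := by linarith
  have hK0 : (0:ℝ) < K := by linarith
  have hCK : C₀ ≤ K := by
    have h1 := le_max_left C₀ 1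
    rw [hKdef]; nlinarith
  set Q : ℝ := K ^ (k₀ + 2) with hQdef
  have hQ1 : (1:ℝ) ≤ Q := one_le_pow₀ hK1
  have hQ0 : (0:ℝ) < Q := lt_of_lt_of_le one_pos hQ1
  set C₂ : ℝ := C₀ * Q with hC₂def
  have hC₂0 : (0:ℝ) < C₂ := mul_pos hC₀ hQ0
  set ε : ℝ := (4 * (1 + Q) * C₂)⁻¹ with hεdef
  have hε0 : (0:ℝ) < ε := by
    rw [hεdef]
    have : (0:ℝ) < 4 * (1 + Q) * C₂ := by positivity
    positivity
  -- Dini: summability and small tail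
  have hsum : Summable (fun k : ℕ => η (θ ^ k)) :=
    dini_summable hθ0 hθ1 hη_nonneg hη_mono hDini
  have tailmono : ∀ m : ℕ, (∑' j : ℕ, η (θ^(j + (m+1)))) ≤ ∑' j : ℕ, η (θ^(j + m)) := by
    intro m
    have hsm : Summable (fun j : ℕ => η (θ^(j+m))) := (summable_nat_add_iff m).2 hsum
    have heq := Summable.tsum_eq_zero_add hsm
    have hshift : (∑' j : ℕ, η (θ^(j + 1 + m))) = ∑' j : ℕ, η (θ^(j + (m+1))) :=
      tsum_congr fun j => by rw [show j+1+m = j+(m+1) from by omega]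
    have hnn : 0 ≤ η (θ^(0+m)) := hη_nonneg _ ⟨(hpowθ _).le, hθle1 _⟩
    calc (∑' j : ℕ, η (θ^(j + (m+1)))) = ∑' j : ℕ, η (θ^(j + 1 + m)) := hshift.symm
      _ ≤ η (θ^(0+m)) + ∑' j : ℕ, η (θ^(j+1+m)) := le_add_of_nonneg_left hnn
      _ = ∑' j : ℕ, η (θ^(j + m)) := heq.symm
  obtain ⟨N₀, hN₀⟩ : ∃ n : ℕ, (∑' k : ℕ, η (θ^(k + n))) < ε := by
    have ht := tendsto_sum_nat_add (f := fun k : ℕ => η (θ^k))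
    exact ((tendsto_order.1 ht).2 ε hε0).exists
  have hNtail0 : (∑' k : ℕ, η (θ^(k + (N₀ + 1)))) ≤ ε := (tailmono N₀).trans hN₀.le
  set N := N₀ + 1 with hNdef
  have hN1 : 1 ≤ N := by omega
  set C₃ : ℝ := 2 + 8 * (1 + Q)^2 with hC₃def
  have hC₃0 : (0:ℝ) < C₃ := by rw [hC₃def]; positivity
  have hC₃1 : (1:ℝ) ≤ C₃ := by rw [hC₃def]; nlinarith [sq_nonneg (1+Q)]
  refine ⟨C₃ * K ^ ((N + 2) * k₀ + 2), mul_pos hC₃0 (pow_pos hK0 _), ?_⟩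
  intro H h δ hδ0 hδ4 _ _ hH0 hh0 hA hB hC r hr
  have hM0 : 0 ≤ H 1 + h 1 :=
    add_nonneg (hH0 1 ⟨zero_le_one, le_refl 1⟩) (hh0 1 ⟨zero_le_one, le_refl 1⟩)
  have h2δ : 2*δ ≤ 1 := by linarith
  -- comparison lemmas
  have CompH : ∀ m : ℕ, ∀ a b : ℝ, δ ≤ a → 2*δ ≤ b → a ≤ b → b ≤ 1 → b ≤ 2^m * a →
      H a ≤ K^m * H b := by
    intro m
    induction m with
    | zero =>
      intro a b h1 h2 h3 h4 h5
      have hab : a = b := le_antisymm h3 (by simpa using h5)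
      rw [hab, pow_zero, one_mul]
    | succ m ih =>
      intro a b h1 h2 h3 h4 h5
      have hb0 : 0 ≤ H b := hH0 b ⟨by linarith, h4⟩
      by_cases hab : b ≤ 2*a
      · have hrr : b/2 ∈ Set.Icc δ (1/2:ℝ) := ⟨by linarith, by linarith⟩
        have ht : a ∈ Set.Icc (b/2) (2*(b/2)) := ⟨by linarith, by linarith⟩
        have hstep := hA (b/2) hrr a ht
        rw [show 2*(b/2) = b by ring] at hstep
        calc H a ≤ C₀ * H b := hstep
          _ ≤ K^(m+1) * H b := by
            apply mul_le_mul_of_nonneg_right _ hb0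
            exact hCK.trans (le_self_pow₀ hK1 (Nat.succ_ne_zero m))
      · push_neg at hab
        have ha2 : a ≤ 1/2 := by linarith
        have hstep : H a ≤ C₀ * H (2*a) :=
          hA a ⟨h1, ha2⟩ a ⟨le_refl a, by linarith⟩
        have hih := ih (2*a) b (by linarith) h2 (by linarith) h4
          (by calc b ≤ 2^(m+1) * a := h5
                _ = 2^m * (2*a) := by ring)
        have hH2a : 0 ≤ H (2*a) := hH0 _ ⟨by linarith, by linarith⟩
        calc H a ≤ C₀ * H (2*a) := hstep
          _ ≤ K * (K^m * H b) := mul_le_mul hCK hih hH2a hK0.le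
          _ = K^(m+1) * H b := by ring
  have Osc : ∀ m : ℕ, ∀ a b : ℝ, δ ≤ a → 2*δ ≤ b → a ≤ b → b ≤ 1 → b ≤ 2^m * a →
      h a ≤ h b + K^(m+1) * H b := by
    intro m
    induction m with
    | zero =>
      intro a b h1 h2 h3 h4 h5
      have hab : a = b := le_antisymm h3 (by simpa using h5)
      have hb0 : 0 ≤ H b := hH0 b ⟨by linarith, h4⟩
      rw [hab]
      have : 0 ≤ K^(0+1) * H b := mul_nonneg (pow_nonneg hK0.le _) hb0
      linarith
    | succ m ih =>
      intro a b h1 h2 h3 h4 h5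
      have hb0 : 0 ≤ H b := hH0 b ⟨by linarith, h4⟩
      have hpm : (0:ℝ) ≤ K^m := pow_nonneg hK0.le m
      by_cases hab : b ≤ 2*a
      · have hrr : b/2 ∈ Set.Icc δ (1/2:ℝ) := ⟨by linarith, by linarith⟩
        have ht : a ∈ Set.Icc (b/2) (2*(b/2)) := ⟨by linarith, by linarith⟩
        have hs : b ∈ Set.Icc (b/2) (2*(b/2)) := ⟨by linarith, by linarith⟩
        have hstep := hB (b/2) hrr a ht b hs
        rw [show 2*(b/2) = b by ring] at hstep
        have h6 : h a - h b ≤ C₀ * H b := (abs_le.1 hstep).2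
        have h7 : C₀ * H b ≤ K^(m+2) * H b := by
          apply mul_le_mul_of_nonneg_right _ hb0
          exact hCK.trans (le_self_pow₀ hK1 (by omega))
        linarith
      · push_neg at hab
        have ha2 : a ≤ 1/2 := by linarith
        have hstep : h a - h (2*a) ≤ C₀ * H (2*a) := by
          have := hB a ⟨h1, ha2⟩ a ⟨le_refl a, by linarith⟩ (2*a) ⟨by linarith, le_refl _⟩
          exact (abs_le.1 this).2
        have hih := ih (2*a) b (by linarith) h2 (by linarith) h4
          (by calc b ≤ 2^(m+1) * a := h5
                _ = 2^m * (2*a) := by ring)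
        have hcompa := CompH m (2*a) b (by linarith) h2 (by linarith) h4
          (by calc b ≤ 2^(m+1) * a := h5
                _ = 2^m * (2*a) := by ring)
        have hH2a : 0 ≤ H (2*a) := hH0 _ ⟨by linarith, by linarith⟩
        have key : K^(m+1) + C₀ * K^m ≤ K^(m+2) := by
          have e1 : K^(m+1) = K^m * K := by ring
          have e2 : K^(m+2) = K^m * (K*K) := by ring
          rw [e1, e2]
          have hin : (0:ℝ) ≤ K*K - K - C₀ := by nlinarith
          nlinarith [mul_nonneg hpm hin]
        have h8 : C₀ * H (2*a) ≤ C₀ * (K^m * H b) :=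
          mul_le_mul_of_nonneg_left hcompa hC₀.le
        nlinarith [mul_le_mul_of_nonneg_right key hb0]
  have CompHh : ∀ m : ℕ, ∀ a b : ℝ, δ ≤ a → 2*δ ≤ b → a ≤ b → b ≤ 1 → b ≤ 2^m * a →
      H a + h a ≤ K^(m+2) * (H b + h b) := by
    intro m a b h1 h2 h3 h4 h5
    have hb0 : 0 ≤ H b := hH0 b ⟨by linarith, h4⟩
    have hhb : 0 ≤ h b := hh0 b ⟨by linarith, h4⟩
    have c1 := CompH m a b h1 h2 h3 h4 h5
    have c2 := Osc m a b h1 h2 h3 h4 h5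
    have hpm : (0:ℝ) ≤ K^m := pow_nonneg hK0.le m
    have key : K^m + K^(m+1) ≤ K^(m+2) := by
      have e1 : K^(m+1) = K^m * K := by ring
      have e2 : K^(m+2) = K^m * (K*K) := by ring
      rw [e1, e2]
      have hin : (0:ℝ) ≤ K*K - K - 1 := by nlinarith
      nlinarith [mul_nonneg hpm hin]
    have c3 : (1:ℝ) ≤ K^(m+2) := one_le_pow₀ hK1
    nlinarith [mul_le_mul_of_nonneg_right key hb0, mul_le_mul_of_nonneg_right c3 hhb]
  -- helper for index rewriting
  have eidx : ∀ a b : ℕ, a = b → H (θ^a) = H (θ^b) := fun a b hab => by rw [hab]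
  obtain ⟨hrδ, hr1⟩ := hr
  by_cases hsmall : θ ^ (N + 2) < δ
  · -- small J case: bounded number of scales
    have key : (1:ℝ) ≤ 2^((N+2)*k₀) * θ^(N+2) := by
      calc (1:ℝ) ≤ (2^k₀*θ)^(N+2) := one_le_pow₀ hθ2
        _ = 2^((N+2)*k₀) * θ^(N+2) := by rw [mul_pow, ← pow_mul, Nat.mul_comm]
    have hθr : θ^(N+2) ≤ r := le_trans hsmall.le hrδ
    have hr2 : 1 ≤ 2^((N+2)*k₀) * r := by
      refine key.trans (mul_le_mul_of_nonneg_left hθr (pow_nonneg (by norm_num) _))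
    have hcomp := CompHh ((N+2)*k₀) r 1 hrδ h2δ hr1 le_rfl (by simpa using hr2)
    have hle : K^((N+2)*k₀+2) * (H 1 + h 1) ≤ C₃ * K^((N+2)*k₀+2) * (H 1 + h 1) := by
      apply mul_le_mul_of_nonneg_right _ hM0
      nlinarith [pow_nonneg hK0.le ((N+2)*k₀+2)]
    linarith
  · push_neg at hsmall
    -- define J
    have hfind : ∃ n : ℕ, θ^n < δ := exists_pow_lt_of_lt_one hδ0 hθ1
    set J : ℕ := Nat.find hfind - 1 with hJdef
    have hfind1 : 1 ≤ Nat.find hfind := by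
      by_contra hcon
      push_neg at hcon
      interval_cases hfd : (Nat.find hfind)
      · have := Nat.find_spec hfind
        rw [hfd] at this
        simp at this
        linarith
    have hJ1 : θ^(J+1) < δ := by
      have := Nat.find_spec hfind
      rwa [show Nat.find hfind = J + 1 from by omega] at this
    have hJ0 : δ ≤ θ^J := by
      by_contra hcon
      push_neg at hcon
      exact Nat.find_min hfind (show J < Nat.find hfind by omega) hcon
    have hJN : N + 2 ≤ J := by
      by_contra hcon
      push_neg at hcon
      have h1 : θ^(N+2) ≤ θ^(J+1) := pow_le_pow_of_le_one hθ0.le hθ1.le (by omega)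
      linarith
    set J' : ℕ := J - N with hJ'def
    have hJ'J : J' + N = J := by omega
    have hJ'2 : 2 ≤ J' := by omega
    have hδj : ∀ j, j ≤ J → δ ≤ θ^j := fun j hj =>
      hJ0.trans (pow_le_pow_of_le_one hθ0.le hθ1.le hj)
    have h2δj : ∀ j, j + 1 ≤ J → 2*δ ≤ θ^j := by
      intro j hj
      have h1 : δ ≤ θ^(j+1) := hδj _ hj
      have e : θ^(j+1) = θ^j * θ := pow_succ θ j
      nlinarith [hpowθ j, mul_le_mul_of_nonneg_left hθ4.le (hpowθ j).le]
    -- recursion for H at geometric scales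
    have hrecu : ∀ j : ℕ, j + 1 ≤ J → H (θ^(j+2)) ≤ (1/2) * H (θ^(j+1))
        + C₂ * η (θ^(J-(j+1))) * (H (θ^j) + h (θ^j)) := by
      intro j hj
      have hθj1 : θ^(j+1) ≤ θ := by
        calc θ^(j+1) ≤ θ^1 := pow_le_pow_of_le_one hθ0.le hθ1.le (by omega)
          _ = θ := pow_one θ
      have hrr : θ^(j+1) ∈ Set.Icc δ (1/2:ℝ) := ⟨hδj _ hj, by linarith⟩
      have hCap := hC (θ^(j+1)) hrr
      rw [show θ * θ^(j+1) = θ^(j+2) from by rw [pow_succ]; ring] at hCap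
      -- compare scale 2θ^{j+1} with θ^j
      have hab : 2*θ^(j+1) ≤ θ^j := by
        have e : θ^(j+1) = θ^j * θ := pow_succ θ j
        nlinarith [hpowθ j, mul_le_mul_of_nonneg_left hθ4.le (hpowθ j).le]
      have hδa : δ ≤ 2*θ^(j+1) := by
        have := hδj _ hj
        nlinarith [hpowθ (j+1)]
      have hratio : θ^j ≤ 2^k₀ * (2*θ^(j+1)) := by
        have e : θ^(j+1) = θ^j * θ := pow_succ θ j
        nlinarith [hpowθ j, mul_le_mul_of_nonneg_left hθ2 (hpowθ j).le]
      have hX := CompHh k₀ (2*θ^(j+1)) (θ^j) hδa (h2δj j hj) hab (hθle1 j) hratio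
      -- monotonicity of η
      have hδθ : δ / θ^(j+1) ≤ θ^(J-(j+1)) := by
        rw [div_le_iff₀ (hpowθ (j+1))]
        calc δ ≤ θ^J := hJ0
          _ = θ^(J-(j+1)) * θ^(j+1) := by rw [← pow_add]; congr 1; omega
      have hmem1 : δ / θ^(j+1) ∈ Set.Icc (0:ℝ) 1 :=
        ⟨div_nonneg hδ0.le (hpowθ _).le, hδθ.trans (hθle1 _)⟩
      have hmem2 : θ^(J-(j+1)) ∈ Set.Icc (0:ℝ) 1 := ⟨(hpowθ _).le, hθle1 _⟩
      have hη1 : η (δ / θ^(j+1)) ≤ η (θ^(J-(j+1))) := hη_mono hmem1 hmem2 hδθ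
      have hη1nn : 0 ≤ η (δ / θ^(j+1)) := hη_nonneg _ hmem1
      have hη2nn : 0 ≤ η (θ^(J-(j+1))) := hη_nonneg _ hmem2
      have hXnn : 0 ≤ H (2*θ^(j+1)) + h (2*θ^(j+1)) := by
        have hmem : (2*θ^(j+1)) ∈ Set.Icc (0:ℝ) 1 :=
          ⟨by nlinarith [hpowθ (j+1)], hab.trans (hθle1 j)⟩
        exact add_nonneg (hH0 _ hmem) (hh0 _ hmem)
      have hGnn : 0 ≤ H (θ^j) + h (θ^j) := by
        have hmem : (θ^j) ∈ Set.Icc (0:ℝ) 1 := ⟨(hpowθ _).le, hθle1 _⟩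
        exact add_nonneg (hH0 _ hmem) (hh0 _ hmem)
      calc H (θ^(j+2)) ≤ (1/2) * H (θ^(j+1))
            + C₀ * η (δ / θ^(j+1)) * (H (2*θ^(j+1)) + h (2*θ^(j+1))) := hCap
        _ ≤ (1/2) * H (θ^(j+1))
            + C₀ * η (θ^(J-(j+1))) * (H (2*θ^(j+1)) + h (2*θ^(j+1))) := by
            have := mul_le_mul_of_nonneg_right
              (mul_le_mul_of_nonneg_left hη1 hC₀.le) hXnn
            linarith
        _ ≤ (1/2) * H (θ^(j+1))
            + C₀ * η (θ^(J-(j+1))) * (K^(k₀+2) * (H (θ^j) + h (θ^j))) := by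
            have := mul_le_mul_of_nonneg_left hX
              (mul_nonneg hC₀.le hη2nn)
            linarith
        _ = (1/2) * H (θ^(j+1)) + C₂ * η (θ^(J-(j+1))) * (H (θ^j) + h (θ^j)) := by
            rw [hC₂def, hQdef]; ring
    -- recursion for h at geometric scales
    have hrecv : ∀ j : ℕ, j + 1 ≤ J → h (θ^(j+1)) ≤ h (θ^j) + Q * H (θ^j) := by
      intro j hj
      have hratio : θ^j ≤ 2^k₀ * θ^(j+1) := by
        have e : θ^(j+1) = θ^j * θ := pow_succ θ j
        nlinarith [hpowθ j, mul_le_mul_of_nonneg_left hθ2 (hpowθ j).le]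
      have hosc := Osc k₀ (θ^(j+1)) (θ^j) (hδj _ hj) (h2δj j hj)
        (pow_le_pow_of_le_one hθ0.le hθ1.le (Nat.le_succ j)) (hθle1 j) hratio
      have hb0 : 0 ≤ H (θ^j) := hH0 _ ⟨(hpowθ _).le, hθle1 _⟩
      have hQle : K^(k₀+1) ≤ Q := by
        rw [hQdef]
        exact pow_le_pow_right₀ hK1 (by omega)
      nlinarith [mul_le_mul_of_nonneg_right hQle hb0]
    -- first scale
    have hG1 : H (θ^1) + h (θ^1) ≤ Q * (H 1 + h 1) := by
      have hcomp := CompHh k₀ (θ^1) 1 (hδj 1 (by omega)) h2δ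
        (by simpa using hθ1.le) le_rfl (by rw [pow_one]; linarith [hθ2])
      rw [hQdef]
      simpa using hcomp
    -- the maximum over ladder scales
    have hne : (Finset.range (J'+1)).Nonempty := Finset.nonempty_range_iff.2 (by omega)
    set S : ℝ := (Finset.range (J'+1)).sup' hne (fun j => H (θ^j) + h (θ^j)) with hSdef
    have hGS : ∀ j, j ≤ J' → H (θ^j) + h (θ^j) ≤ S := by
      intro j hj
      exact Finset.le_sup' (f := fun j => H (θ^j) + h (θ^j))
        (Finset.mem_range.2 (by omega))
    have hS0 : 0 ≤ S := by
      have h1 : 0 ≤ H (θ^0) + h (θ^0) :=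
        add_nonneg (hH0 _ ⟨(hpowθ _).le, hθle1 _⟩) (hh0 _ ⟨(hpowθ _).le, hθle1 _⟩)
      exact h1.trans (hGS 0 (by omega))
    set T : ℝ := ∑ j ∈ Finset.range (J'+1), H (θ^j) with hTdef
    have huT : ∀ j, j ≤ J' → H (θ^j) ≤ T := by
      intro j hj
      exact Finset.single_le_sum (f := fun j => H (θ^j))
        (fun i _ => hH0 _ ⟨(hpowθ _).le, hθle1 _⟩) (Finset.mem_range.2 (by omega))
    -- bound on T
    have hTb : T ≤ 2*(H (θ^0) + H (θ^1)) + 2*C₂*ε*S := by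
      have e1 : T = (∑ j ∈ Finset.range (J'-1), H (θ^(j+2))) + H (θ^1) + H (θ^0) := by
        rw [hTdef, Finset.sum_range_succ' (fun j => H (θ^j)) J',
          show J' = (J'-1)+1 from by omega,
          Finset.sum_range_succ' (fun k => H (θ^(k+1))) (J'-1)]
        norm_num
      have e2 : ∀ j ∈ Finset.range (J'-1), H (θ^(j+2)) ≤ (1/2) * H (θ^(j+1))
          + C₂ * η (θ^(J-(j+1))) * S := by
        intro j hj
        have hjm : j < J'-1 := Finset.mem_range.1 hj
        have h3 := hrecu j (by omega)
        have h4 : H (θ^j) + h (θ^j) ≤ S := hGS j (by omega)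
        have hηnn : 0 ≤ η (θ^(J-(j+1))) := hη_nonneg _ ⟨(hpowθ _).le, hθle1 _⟩
        have h5 := mul_le_mul_of_nonneg_left h4 (mul_nonneg hC₂0.le hηnn)
        linarith
      have e3 : ∑ j ∈ Finset.range (J'-1), H (θ^(j+2))
          ≤ (1/2) * (∑ j ∈ Finset.range (J'-1), H (θ^(j+1)))
            + C₂ * (∑ j ∈ Finset.range (J'-1), η (θ^(J-(j+1)))) * S := by
        calc ∑ j ∈ Finset.range (J'-1), H (θ^(j+2))
            ≤ ∑ j ∈ Finset.range (J'-1),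
              ((1/2) * H (θ^(j+1)) + C₂ * η (θ^(J-(j+1))) * S) := Finset.sum_le_sum e2
          _ = (1/2) * (∑ j ∈ Finset.range (J'-1), H (θ^(j+1)))
              + C₂ * (∑ j ∈ Finset.range (J'-1), η (θ^(J-(j+1)))) * S := by
              rw [Finset.sum_add_distrib, ← Finset.mul_sum]
              congr 1
              rw [← Finset.sum_mul, ← Finset.mul_sum]
      have e4 : ∑ j ∈ Finset.range (J'-1), H (θ^(j+1)) ≤ T := by
        rw [hTdef]
        have esub : ∑ j ∈ Finset.range (J'-1), H (θ^(j+1))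
            = ∑ j ∈ Finset.Ico 1 J', H (θ^j) := by
          rw [Finset.sum_Ico_eq_sum_range]
          refine Finset.sum_congr (by congr 1) fun j _ => eidx _ _ (by omega)
        rw [esub]
        apply Finset.sum_le_sum_of_subset_of_nonneg
        · intro x hx
          simp only [Finset.mem_Ico, Finset.mem_range] at *
          omega
        · intro i _ _
          exact hH0 _ ⟨(hpowθ _).le, hθle1 _⟩
      have e5 : ∑ j ∈ Finset.range (J'-1), η (θ^(J-(j+1))) ≤ ε := by
        have er : ∑ j ∈ Finset.range (J'-1), η (θ^(J-(j+1)))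
            = ∑ j ∈ Finset.range (J'-1), η (θ^(j + N + 1)) := by
          rw [← Finset.sum_range_reflect (fun i => η (θ^(i + N + 1))) (J'-1)]
          refine Finset.sum_congr rfl fun j hj => ?_
          have hj' : j < J'-1 := Finset.mem_range.1 hj
          congr 2
          omega
        have hsum' : Summable (fun j : ℕ => η (θ^(j + (N+1)))) :=
          (summable_nat_add_iff (N+1)).2 hsum
        have er2 : ∑ j ∈ Finset.range (J'-1), η (θ^(j + N + 1))
            = ∑ j ∈ Finset.range (J'-1), η (θ^(j + (N+1))) :=
          Finset.sum_congr rfl fun j _ => by rw [show j + N + 1 = j + (N+1) from by omega]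
        have tail1 : ∑ j ∈ Finset.range (J'-1), η (θ^(j + (N+1)))
            ≤ ∑' j : ℕ, η (θ^(j + (N+1))) :=
          Summable.sum_le_tsum _ (fun i _ => hη_nonneg _ ⟨(hpowθ _).le, hθle1 _⟩) hsum'
        have tail2 := tailmono N
        rw [er, er2]
        calc ∑ j ∈ Finset.range (J'-1), η (θ^(j + (N+1)))
            ≤ ∑' j : ℕ, η (θ^(j + (N+1))) := tail1
          _ ≤ ∑' j : ℕ, η (θ^(j + N)) := tail2
          _ ≤ ε := hNtail0
      have e6 : C₂ * (∑ j ∈ Finset.range (J'-1), η (θ^(J-(j+1)))) * S ≤ C₂ * ε * S := by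
        apply mul_le_mul_of_nonneg_right _ hS0
        exact mul_le_mul_of_nonneg_left e5 hC₂0.le
      linarith
    -- bound on v_j
    have hvb : ∀ j, j ≤ J' → h (θ^j) ≤ h (θ^0) + Q * ∑ i ∈ Finset.range j, H (θ^i) := by
      intro j
      induction j with
      | zero => intro _; simp
      | succ n ih =>
        intro hn
        have h1 := hrecv n (by omega)
        have h2 := ih (by omega)
        rw [Finset.sum_range_succ, mul_add]
        linarith
    have hvT : ∀ j, j ≤ J' → h (θ^j) ≤ h (θ^0) + Q * T := by
      intro j hj
      have h1 := hvb j hj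
      have h2 : ∑ i ∈ Finset.range j, H (θ^i) ≤ T := by
        rw [hTdef]
        apply Finset.sum_le_sum_of_subset_of_nonneg
        · intro x hx
          simp only [Finset.mem_range] at *
          omega
        · intro i _ _
          exact hH0 _ ⟨(hpowθ _).le, hθle1 _⟩
      have h3 := mul_le_mul_of_nonneg_left h2 hQ0.le
      linarith
    -- bound S
    have hSb : S ≤ h (θ^0) + (1+Q) * T := by
      rw [hSdef]
      apply Finset.sup'_le
      intro j hj
      have hj' : j ≤ J' := by
        have := Finset.mem_range.1 hj
        omega
      have h1 := huT j hj'
      have h2 := hvT j hj'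
      have e : (1+Q)*T = T + Q*T := by ring
      linarith
    have habs : S ≤ 2*(h (θ^0)) + 4*(1+Q)*(H (θ^0) + H (θ^1)) := by
      have h1 : (1+Q)*T ≤ (1+Q)*(2*(H (θ^0) + H (θ^1)) + 2*C₂*ε*S) :=
        mul_le_mul_of_nonneg_left hTb (by linarith)
      have hεid : (1+Q) * (2*C₂*ε) = 1/2 := by
        rw [hεdef]
        have hne1 : (1+Q) ≠ 0 := by positivity
        field_simp
        ring
      have expand : (1+Q)*(2*(H (θ^0) + H (θ^1)) + 2*C₂*ε*S)
          = 2*(1+Q)*(H (θ^0) + H (θ^1)) + ((1+Q)*(2*C₂*ε))*S := by ring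
      rw [expand, hεid] at h1
      linarith
    have hSM : S ≤ C₃ * (H 1 + h 1) := by
      have hu0e : H (θ^0) = H 1 := by rw [pow_zero]
      have hv0e : h (θ^0) = h 1 := by rw [pow_zero]
      have hH1 : 0 ≤ H 1 := hH0 1 ⟨zero_le_one, le_refl 1⟩
      have hh1 : 0 ≤ h 1 := hh0 1 ⟨zero_le_one, le_refl 1⟩
      have hv1 : 0 ≤ h (θ^1) := hh0 _ ⟨(hpowθ _).le, hθle1 _⟩
      have k1 : H (θ^0) + H (θ^1) ≤ H 1 + Q*(H 1 + h 1) := by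
        rw [hu0e]
        linarith [hG1]
      have k2 : H 1 + Q*(H 1+h 1) ≤ (1+Q)*(H 1 + h 1) := by
        have e : (1+Q)*(H 1+h 1) = (H 1 + h 1) + Q*(H 1+h 1) := by ring
        linarith
      have k3 : 4*(1+Q)*(H (θ^0) + H (θ^1)) ≤ 4*(1+Q)*((1+Q)*(H 1+h 1)) := by
        apply mul_le_mul_of_nonneg_left (k1.trans k2)
        linarith
      calc S ≤ 2*(h (θ^0)) + 4*(1+Q)*(H (θ^0) + H (θ^1)) := habs
        _ ≤ 2*(h 1) + 4*(1+Q)*((1+Q)*(H 1+h 1)) := by rw [hv0e]; linarith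
        _ ≤ C₃ * (H 1 + h 1) := by
            rw [hC₃def]
            have e : (2 + 8*(1+Q)^2)*(H 1 + h 1)
                = 2*(H 1 + h 1) + 8*((1+Q)^2*(H 1+h 1)) := by ring
            have t1 : 4*(1+Q)*((1+Q)*(H 1+h 1)) = 4*((1+Q)^2*(H 1+h 1)) := by ring
            have t2 : 0 ≤ (1+Q)^2*(H 1+h 1) := mul_nonneg (sq_nonneg _) hM0
            rw [t1, e]
            linarith
    -- conclusion for arbitrary r
    have final : ∀ e : ℕ, e + 2 ≤ (N+2)*k₀ + 2 → ∀ b : ℕ, b ≤ J' →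
        H r + h r ≤ K^(e+2) * (H (θ^b) + h (θ^b)) →
        H r + h r ≤ C₃ * K^((N+2)*k₀+2) * (H 1 + h 1) := by
      intro e he b hb hcomp
      have h1 : H (θ^b) + h (θ^b) ≤ S := hGS b hb
      have h2 : K^(e+2) ≤ K^((N+2)*k₀+2) := pow_le_pow_right₀ hK1 he
      have hpe : (0:ℝ) ≤ K^(e+2) := pow_nonneg hK0.le _
      have hpE : (0:ℝ) ≤ K^((N+2)*k₀+2) := pow_nonneg hK0.le _
      calc H r + h r ≤ K^(e+2) * (H (θ^b) + h (θ^b)) := hcomp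
        _ ≤ K^(e+2) * S := mul_le_mul_of_nonneg_left (h1) hpe
        _ ≤ K^((N+2)*k₀+2) * S := mul_le_mul_of_nonneg_right h2 hS0
        _ ≤ K^((N+2)*k₀+2) * (C₃ * (H 1 + h 1)) := mul_le_mul_of_nonneg_left hSM hpE
        _ = C₃ * K^((N+2)*k₀+2) * (H 1 + h 1) := by ring
    by_cases hcase : θ^J' ≤ r
    · -- r between ladder scales
      have hex : ∃ n : ℕ, θ^n < r := exists_pow_lt_of_lt_one (lt_of_lt_of_le hδ0 hrδ) hθ1
      have hex1 : 1 ≤ Nat.find hex := by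
        by_contra hcon
        push_neg at hcon
        interval_cases hfd : (Nat.find hex)
        · have := Nat.find_spec hex
          rw [hfd] at this
          simp at this
          linarith
      set j : ℕ := Nat.find hex - 1 with hjdef
      have hjr : r ≤ θ^j := by
        by_contra hcon
        push_neg at hcon
        exact Nat.find_min hex (show j < Nat.find hex by omega) hcon
      have hjr2 : θ^(j+1) < r := by
        have := Nat.find_spec hex
        rwa [show Nat.find hex = j + 1 from by omega] at this
      have hjJ' : j ≤ J' := by
        by_contra hcon
        push_neg at hcon
        have h1 : θ^j ≤ θ^(J'+1) := pow_le_pow_of_le_one hθ0.le hθ1.le (by omega)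
        have h2 : θ^(J'+1) < θ^J' := by
          have e : θ^(J'+1) = θ^J' * θ := pow_succ θ J'
          nlinarith [hpowθ J']
        linarith
      have hb2δ : 2*δ ≤ θ^j := h2δj j (by omega)
      have hratio : θ^j ≤ 2^k₀ * r := by
        have e : θ^(j+1) = θ^j * θ := pow_succ θ j
        nlinarith [hpowθ j, pow_pos (show (0:ℝ) < 2 by norm_num) k₀,
          mul_le_mul_of_nonneg_left hθ2 (hpowθ j).le]
      have hcomp := CompHh k₀ r (θ^j) hrδ hb2δ hjr (hθle1 j) hratio
      exact final k₀ (Nat.add_le_add_right (Nat.le_mul_of_pos_left k₀ (by omega)) 2) j hjJ' hcomp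
    · push_neg at hcase
      have hb2δ : 2*δ ≤ θ^J' := h2δj J' (by omega)
      have hratio : θ^J' ≤ 2^((N+1)*k₀) * r := by
        have h3 : (1:ℝ) ≤ 2^((N+1)*k₀) * θ^(N+1) := by
          calc (1:ℝ) ≤ (2^k₀*θ)^(N+1) := one_le_pow₀ hθ2
            _ = 2^((N+1)*k₀)*θ^(N+1) := by rw [mul_pow, ← pow_mul, Nat.mul_comm]
        have h4 : θ^J' * θ^(N+1) < r := by
          calc θ^J' * θ^(N+1) = θ^(J+1) := by rw [← pow_add]; congr 1; omega
            _ < δ := hJ1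
            _ ≤ r := hrδ
        nlinarith [hpowθ J', pow_pos (show (0:ℝ) < 2 by norm_num) ((N+1)*k₀),
          hpowθ (N+1)]
      have hcomp := CompHh ((N+1)*k₀) r (θ^J') hrδ hb2δ hcase.le (hθle1 J') hratio
      exact final ((N+1)*k₀)
        (Nat.add_le_add_right (Nat.mul_le_mul_right k₀ (by omega)) 2) J' le_rfl hcomp
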